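/- Let Σ be a compact oriented surface, φ ∈ Homeo(Σ) a homeomorphism preserving a Borel probability measure μ, and k ≥ 1 an integer. Let π_k: M_{φ^k} → M_φ be the k-fold covering map [(t, p)] ↦ [(kt − ⌊kt⌋, φ^{⌊kt⌋}(p))], and let T: M_{φ^k} → M_{φ^k}, [(t, p)] ↦ [(t − 1/k, φ(p))] generate its deck group ℤ/kℤ. Then (π_k)_* C(φ^k, μ) = k · C(φ, μ) in H_1(M_φ; ℝ), and ⟨C(φ^k, μ), f∘T − f⟩ = 0 for every continuous f: M_{φ^k} → ℝ/ℤ. -/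

import Mathlib

open MeasureTheory Set Function Filter

noncomputable section

/-- The circle `𝕋 = ℝ/ℤ`. -/
abbrev Circ : Type := AddCircle (1 : ℝ)

/-- The mapping-torus identification on `ℝ × X`: `(t, x) ∼ (t − n, eⁿ x)` for `n : ℤ`
(so in particular `(1, x) ∼ (0, e x)`), where `e` is the underlying bijection of the
homeomorphism. -/
def mtRel {X : Type*} (e : Equiv.Perm X) (p q : ℝ × X) : Prop :=
  ∃ n : ℤ, q.1 = p.1 - n ∧ q.2 = (e ^ n) p.2

/-- The mapping torus `M_φ`: the quotient of `ℝ × X` by `(1, x) ∼ (0, e x)`, with the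
quotient topology. -/
def MappingTorus {X : Type*} [TopologicalSpace X] (e : Equiv.Perm X) : Type _ :=
  Quot (mtRel e)

instance {X : Type*} [TopologicalSpace X] (e : Equiv.Perm X) :
    TopologicalSpace (MappingTorus e) :=
  inferInstanceAs (TopologicalSpace (Quot (mtRel e)))

instance {X : Type*} [TopologicalSpace X] (e : Equiv.Perm X) :
    MeasurableSpace (MappingTorus e) := borel _

instance {X : Type*} [TopologicalSpace X] (e : Equiv.Perm X) :
    BorelSpace (MappingTorus e) := ⟨rfl⟩

/-- The canonical projection `ℝ × X → M_φ`. -/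
def mtMk {X : Type*} [TopologicalSpace X] (e : Equiv.Perm X) : ℝ × X → MappingTorus e :=
  Quot.mk (mtRel e)

/-- The suspension flow `ψ^s [(t, x)] = [(t + s, x)]` on the mapping torus. -/
def suspFlow {X : Type*} [TopologicalSpace X] (e : Equiv.Perm X) (s : ℝ) :
    MappingTorus e → MappingTorus e :=
  Quot.map (fun p => (p.1 + s, p.2)) (by
    rintro ⟨t, x⟩ ⟨t', y⟩ ⟨n, h1, h2⟩
    exact ⟨n, by simp only at h1 h2 ⊢; rw [h1]; ring, h2⟩)

/-- The measure `dt ⊗ μ` on the mapping torus: the pushforward of the product of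
Lebesgue measure on `[0,1)` with `μ` under the canonical projection. -/
def mtMeasure {X : Type*} [TopologicalSpace X] (e : Equiv.Perm X) [MeasurableSpace X]
    (μ : Measure X) : Measure (MappingTorus e) :=
  Measure.map (mtMk e) ((volume.restrict (Ico (0 : ℝ) 1)).prod μ)

/-- `AsympPair e μ f r` says that the pairing `⟨C(φ, μ), [f]⟩` of Schwartzman's
asymptotic cycle `C(φ, μ) ∈ H₁(M_φ; ℝ) ≅ Hom([M_φ, ℝ/ℤ], ℝ)` with the class of
`f : M_φ → ℝ/ℤ` equals `r`: there is a continuous family `G (s, ·)` of real-valued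
lifts of `f ∘ ψ^s − f` with `G (0, ·) = 0` such that `(∫ G (s, ·) d(dt ⊗ μ)) / s → r`
as `s → ∞` (by Kingman's subadditive ergodic theorem this limit is the integral of
`G = lim g_s / s` against `dt ⊗ μ`). -/
def AsympPair {X : Type*} [TopologicalSpace X] (e : Equiv.Perm X) [MeasurableSpace X]
    (μ : Measure X) (f : C(MappingTorus e, Circ)) (r : ℝ) : Prop :=
  ∃ G : ℝ × MappingTorus e → ℝ, Continuous G ∧ (∀ m, G (0, m) = 0) ∧
    (∀ s m, ((G (s, m) : ℝ) : Circ) = f (suspFlow e s m) - f m) ∧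
    Tendsto (fun s : ℝ => (∫ m, G (s, m) ∂(mtMeasure e μ)) / s) atTop (nhds r)

/-- The `k`-fold covering map `π_k : M_{φ^k} → M_φ`,
`[(t, p)] ↦ [(kt − ⌊kt⌋, φ^{⌊kt⌋}(p))] = [(kt, p)]`. -/
def coverMap {X : Type*} [TopologicalSpace X] (φ : X ≃ₜ X) (k : ℕ) :
    MappingTorus (φ.toEquiv ^ k) → MappingTorus φ.toEquiv :=
  Quot.lift (fun p => mtMk φ.toEquiv ((k : ℝ) * p.1, p.2)) (by
    rintro ⟨t, x⟩ ⟨t', y⟩ ⟨n, h1, h2⟩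
    simp only at h1 h2
    apply Quot.sound
    refine ⟨(k : ℤ) * n, ?_, ?_⟩
    · simp only [h1]; push_cast; ring
    · simp only [h2]
      have : (φ.toEquiv ^ k) ^ n = φ.toEquiv ^ ((k : ℤ) * n) := by
        rw [← zpow_natCast φ.toEquiv k, ← zpow_mul]
      rw [this])

lemma continuous_coverMap {X : Type*} [TopologicalSpace X] (φ : X ≃ₜ X) (k : ℕ) :
    Continuous (coverMap φ k) :=
  continuous_quot_lift _
    (continuous_quot_mk.comp ((continuous_const.mul continuous_fst).prodMk continuous_snd))

/-- The generator `T : M_{φ^k} → M_{φ^k}`, `[(t, p)] ↦ [(t − 1/k, φ(p))]`, of the deck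
group `ℤ/kℤ` of the covering `π_k`. -/
def deckMap {X : Type*} [TopologicalSpace X] (φ : X ≃ₜ X) (k : ℕ) :
    MappingTorus (φ.toEquiv ^ k) → MappingTorus (φ.toEquiv ^ k) :=
  Quot.lift (fun p => mtMk (φ.toEquiv ^ k) (p.1 - 1 / (k : ℝ), φ p.2)) (by
    rintro ⟨t, x⟩ ⟨t', y⟩ ⟨n, h1, h2⟩
    simp only at h1 h2
    apply Quot.sound
    refine ⟨n, by rw [h1]; ring, ?_⟩
    simp only [h2]
    have hc : Commute ((φ.toEquiv ^ k) ^ n) φ.toEquiv :=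
      ((Commute.refl φ.toEquiv).pow_left k).zpow_left n
    calc φ (((φ.toEquiv ^ k) ^ n) x) = (φ.toEquiv * ((φ.toEquiv ^ k) ^ n)) x := rfl
      _ = (((φ.toEquiv ^ k) ^ n) * φ.toEquiv) x := by rw [hc.eq]
      _ = ((φ.toEquiv ^ k) ^ n) (φ x) := rfl)

lemma continuous_deckMap {X : Type*} [TopologicalSpace X] (φ : X ≃ₜ X) (k : ℕ) :
    Continuous (deckMap φ k) :=
  continuous_quot_lift _
    (continuous_quot_mk.comp ((continuous_fst.sub continuous_const).prodMk
      (φ.continuous.comp continuous_snd)))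

/-!
Lifts to `ℝ` of maps into `ℝ/ℤ` are unique once their value at time `0` is fixed, since
`ℝ → ℝ/ℤ` is a covering. Hence the lift for `f ∘ π_k` at time `s` is the lift for `f` at
time `k s` composed with `π_k`, and as `π_k` pushes `dt ⊗ μ` forward to `dt ⊗ μ`, the
averages differ exactly by the rescaling of time. For the deck transformation `T`, the sum
of the lift for `f ∘ T - f` along the orbit `T^j`, `j < k`, telescopes to a lift of `0`
(as `T^k = id`), so it vanishes; since `T` preserves `dt ⊗ μ`, all `k` terms have the same
integral, which is therefore zero. Both measure statements come from the fact that every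
slab `[a, a + 1) × Σ` is a fundamental domain of `M_φ`.
-/

theorem lift_eq_of_coe_eq {M : Type*} [TopologicalSpace M] {G₁ G₂ : ℝ × M → ℝ}
    (h₁ : Continuous G₁) (h₂ : Continuous G₂) (h0 : ∀ m, G₁ (0, m) = G₂ (0, m))
    (h : ∀ s m, (G₁ (s, m) : Circ) = G₂ (s, m)) : G₁ = G₂ := by
  ext ⟨s, m⟩
  have hm : (fun s => G₁ (s, m)) = fun s => G₂ (s, m) :=
    (AddCircle.isCoveringMap_coe (1 : ℝ)).eq_of_comp_eq (by fun_prop) (by fun_prop)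
      (funext fun s => h s m) 0 (h0 m)
  exact congrFun hm s

theorem Equiv.Perm.measurePreserving_zpow {α : Type*} [MeasurableSpace α] {μ : Measure α}
    {e : Equiv.Perm α} (he : MeasurePreserving e μ μ) (he' : MeasurePreserving e.symm μ μ)
    (n : ℤ) : MeasurePreserving ⇑(e ^ n) μ μ := by
  obtain ⟨m, rfl | rfl⟩ := n.eq_nat_or_neg
  · rw [zpow_natCast, Equiv.Perm.coe_pow]
    exact he.iterate m
  · rw [zpow_neg, zpow_natCast, ← inv_pow, Equiv.Perm.coe_pow]
    exact he'.iterate m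

theorem Homeomorph.measurePreserving_toEquiv_zpow {X : Type*} [TopologicalSpace X]
    [MeasurableSpace X] [BorelSpace X] {μ : Measure X} {φ : X ≃ₜ X}
    (hφ : MeasurePreserving φ μ μ) (n : ℤ) : MeasurePreserving ⇑(φ.toEquiv ^ n) μ μ :=
  Equiv.Perm.measurePreserving_zpow hφ (hφ.symm φ.toMeasurableEquiv) n

theorem measurePreserving_prodMap_add_const {X : Type*} [MeasurableSpace X] {μ : Measure X}
    [SFinite μ] {ψ : X → X} (hψ : MeasurePreserving ψ μ μ) (c a b : ℝ) :
    MeasurePreserving (Prod.map (· + c) ψ) ((volume.restrict (Ico a b)).prod μ)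
      ((volume.restrict (Ico (a + c) (b + c))).prod μ) := by
  have h := (measurePreserving_add_right volume c).restrict_preimage
    (measurableSet_Ico (a := a + c) (b := b + c))
  rw [preimage_add_const_Ico, add_sub_cancel_right, add_sub_cancel_right] at h
  exact h.prod hψ

theorem map_const_mul_restrict_Ico {c : ℝ} (hc : 0 < c) (a b : ℝ) :
    (volume.restrict (Ico a b)).map (c * ·)
      = ENNReal.ofReal c⁻¹ • volume.restrict (Ico (c * a) (c * b)) := by
  have h := (Homeomorph.mulLeft₀ c hc.ne').measurableEmbedding.restrict_map volume
    (Ico (c * a) (c * b))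
  rw [Homeomorph.coe_mulLeft₀, Real.map_volume_mul_left hc.ne', preimage_const_mul_Ico₀ _ _ hc,
    mul_div_cancel_left₀ _ hc.ne', mul_div_cancel_left₀ _ hc.ne', Measure.restrict_smul,
    abs_of_pos (inv_pos.mpr hc)] at h
  exact h.symm

section Topology

variable {X : Type*} [TopologicalSpace X]

theorem continuous_mtMk (e : Equiv.Perm X) : Continuous (mtMk e) :=
  continuous_quot_mk

theorem mtMk_add_intCast (e : Equiv.Perm X) (n : ℤ) (t : ℝ) (x : X) :
    mtMk e (t + n, x) = mtMk e (t, (e ^ n) x) :=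
  Quot.sound ⟨n, by simp, rfl⟩

theorem mtMk_comp_prodMap_add_intCast (e : Equiv.Perm X) (n : ℤ) :
    mtMk e ∘ Prod.map (· + (n : ℝ)) ⇑(e ^ (-n)) = mtMk e := by
  ext ⟨t, x⟩
  rw [comp_apply, Prod.map_apply, mtMk_add_intCast, ← Equiv.Perm.mul_apply, ← zpow_add,
    add_neg_cancel, zpow_zero, Equiv.Perm.one_apply]

instance [CompactSpace X] (e : Equiv.Perm X) : CompactSpace (MappingTorus e) := by
  have hsurj : mtMk e '' (Icc (0 : ℝ) 1 ×ˢ univ) = univ := by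
    refine eq_univ_of_forall fun m => Quot.ind (fun ⟨t, x⟩ => ?_) m
    refine ⟨(Int.fract t, (e ^ ⌊t⌋) x),
      ⟨⟨Int.fract_nonneg t, (Int.fract_lt_one t).le⟩, trivial⟩, ?_⟩
    rw [← mtMk_add_intCast, Int.fract_add_floor]
    rfl
  exact ⟨hsurj ▸ (isCompact_Icc.prod isCompact_univ).image (continuous_mtMk e)⟩

instance [MeasurableSpace X] (e : Equiv.Perm X) (μ : Measure X) [IsFiniteMeasure μ] :
    IsFiniteMeasure (mtMeasure e μ) := by
  unfold mtMeasure
  infer_instance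

theorem deckMap_mtMk (φ : X ≃ₜ X) (k : ℕ) (t : ℝ) (x : X) :
    deckMap φ k (mtMk (φ.toEquiv ^ k) (t, x)) = mtMk (φ.toEquiv ^ k) (t - 1 / k, φ x) :=
  rfl

theorem coverMap_semiconj_suspFlow (φ : X ≃ₜ X) (k : ℕ) (s : ℝ) :
    Semiconj (coverMap φ k) (suspFlow (φ.toEquiv ^ k) s) (suspFlow φ.toEquiv (k * s)) := by
  rintro ⟨t, x⟩
  exact congrArg (mtMk φ.toEquiv) (by simp only [mul_add])

theorem deckMap_commute_suspFlow (φ : X ≃ₜ X) (k : ℕ) (s : ℝ) :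
    Function.Commute (deckMap φ k) (suspFlow (φ.toEquiv ^ k) s) := by
  rintro ⟨t, x⟩
  exact congrArg (mtMk (φ.toEquiv ^ k)) (by simp only [sub_add_eq_add_sub])

theorem deckMap_iterate_mtMk (φ : X ≃ₜ X) (k j : ℕ) (t : ℝ) (x : X) :
    (deckMap φ k)^[j] (mtMk (φ.toEquiv ^ k) (t, x))
      = mtMk (φ.toEquiv ^ k) (t - j / k, (φ.toEquiv ^ j) x) := by
  induction j with
  | zero => simp
  | succ j ih =>
    rw [iterate_succ_apply', ih, deckMap_mtMk, pow_succ', Equiv.Perm.mul_apply]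
    congr 2
    push_cast
    ring

theorem deckMap_iterate_self (φ : X ≃ₜ X) {k : ℕ} (hk : k ≠ 0) :
    (deckMap φ k)^[k] = id := by
  ext ⟨t, x⟩
  have h := mtMk_add_intCast (φ.toEquiv ^ k) (-1) t ((φ.toEquiv ^ k) x)
  rw [zpow_neg_one, Equiv.Perm.inv_def, Equiv.symm_apply_apply, Int.cast_neg, Int.cast_one,
    ← sub_eq_add_neg] at h
  change (deckMap φ k)^[k] (mtMk _ (t, x)) = mtMk _ (t, x)
  rw [deckMap_iterate_mtMk, div_self (Nat.cast_ne_zero.mpr hk), h]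

end Topology

section Measure

variable {X : Type*} [TopologicalSpace X] [MeasurableSpace X] [BorelSpace X]
  [SecondCountableTopology X] {μ : Measure X} [SFinite μ]

def slabMeasure (e : Equiv.Perm X) (μ : Measure X) (a b : ℝ) : Measure (MappingTorus e) :=
  ((volume.restrict (Ico a b)).prod μ).map (mtMk e)

theorem measurable_mtMk (e : Equiv.Perm X) : Measurable (mtMk e) :=
  (continuous_mtMk e).measurable

theorem slabMeasure_union (e : Equiv.Perm X) {a b c : ℝ} (hab : a ≤ b) (hbc : b ≤ c) :
    slabMeasure e μ a c = slabMeasure e μ a b + slabMeasure e μ b c := by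
  rw [slabMeasure, ← Ico_union_Ico_eq_Ico hab hbc,
    Measure.restrict_union Ico_disjoint_Ico_same measurableSet_Ico, Measure.add_prod,
    Measure.map_add _ _ (measurable_mtMk e), slabMeasure, slabMeasure]

theorem slabMeasure_add_intCast {e : Equiv.Perm X}
    (he : ∀ n : ℤ, MeasurePreserving ⇑(e ^ n) μ μ) (n : ℤ) (a b : ℝ) :
    slabMeasure e μ (a + n) (b + n) = slabMeasure e μ a b := by
  rw [slabMeasure, slabMeasure, ← (measurePreserving_prodMap_add_const (he (-n)) n a b).map_eq,
    Measure.map_map (measurable_mtMk e) ((measurable_add_const _).prodMap (he (-n)).measurable),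
    mtMk_comp_prodMap_add_intCast]

theorem slabMeasure_add_one {e : Equiv.Perm X}
    (he : ∀ n : ℤ, MeasurePreserving ⇑(e ^ n) μ μ) (a : ℝ) :
    slabMeasure e μ a (a + 1) = mtMeasure e μ := by
  -- cut `[a, a + 1)` at the integer `n` and translate `[a, n)` by one
  set n : ℤ := ⌊a⌋ + 1
  have han : a ≤ n := by push_cast [n]; linarith [Int.lt_floor_add_one a]
  have hna : (n : ℝ) ≤ a + 1 := by push_cast [n]; linarith [Int.floor_le a]
  calc slabMeasure e μ a (a + 1)
      = slabMeasure e μ n (a + 1) + slabMeasure e μ (a + 1) (n + 1) := by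
        rw [slabMeasure_union e han hna, add_comm, ← Int.cast_one,
          slabMeasure_add_intCast he]
    _ = slabMeasure e μ (0 + n) (1 + n) := by
        rw [← slabMeasure_union e hna (by linarith), zero_add, add_comm 1]
    _ = mtMeasure e μ := slabMeasure_add_intCast he n 0 1

theorem slabMeasure_zero_natCast {e : Equiv.Perm X}
    (he : ∀ n : ℤ, MeasurePreserving ⇑(e ^ n) μ μ) (n : ℕ) :
    slabMeasure e μ 0 n = n • mtMeasure e μ := by
  induction n with
  | zero => simp [slabMeasure]
  | succ n ih =>
    rw [Nat.cast_succ, slabMeasure_union e n.cast_nonneg (by linarith), ih,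
      slabMeasure_add_one he, succ_nsmul]

theorem measurePreserving_coverMap {φ : X ≃ₜ X} (hφ : MeasurePreserving φ μ μ) {k : ℕ}
    (hk : k ≠ 0) :
    MeasurePreserving (coverMap φ k) (mtMeasure (φ.toEquiv ^ k) μ)
      (mtMeasure φ.toEquiv μ) := by
  refine ⟨(continuous_coverMap φ k).measurable, ?_⟩
  have hk₀ : (0 : ℝ) < k := by positivity
  have hscale : ((volume.restrict (Ico (0 : ℝ) 1)).prod μ).map (Prod.map ((k : ℝ) * ·) id)
      = ENNReal.ofReal (k : ℝ)⁻¹ • (volume.restrict (Ico (0 : ℝ) k)).prod μ := by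
    rw [← Measure.map_prod_map _ _ (measurable_const_mul _) measurable_id, Measure.map_id,
      map_const_mul_restrict_Ico hk₀, mul_zero, mul_one, Measure.prod_smul_left]
  rw [mtMeasure, Measure.map_map (continuous_coverMap φ k).measurable (measurable_mtMk _),
    show coverMap φ k ∘ mtMk _ = mtMk φ.toEquiv ∘ Prod.map ((k : ℝ) * ·) id from rfl,
    ← Measure.map_map (measurable_mtMk _) ((measurable_const_mul _).prodMap measurable_id),
    hscale, Measure.map_smul, ← slabMeasure,
    slabMeasure_zero_natCast (Homeomorph.measurePreserving_toEquiv_zpow hφ),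
    ← Nat.cast_smul_eq_nsmul ENNReal, smul_smul,
    ENNReal.ofReal_inv_of_pos hk₀, ENNReal.ofReal_natCast,
    ENNReal.inv_mul_cancel (by exact_mod_cast hk) (ENNReal.natCast_ne_top k), one_smul]

theorem measurePreserving_deckMap {φ : X ≃ₜ X} (hφ : MeasurePreserving φ μ μ) (k : ℕ) :
    MeasurePreserving (deckMap φ k) (mtMeasure (φ.toEquiv ^ k) μ)
      (mtMeasure (φ.toEquiv ^ k) μ) := by
  refine ⟨(continuous_deckMap φ k).measurable, ?_⟩
  have he : ∀ n : ℤ, MeasurePreserving ⇑((φ.toEquiv ^ k) ^ n) μ μ := fun n => by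
    rw [← zpow_natCast, ← zpow_mul]
    exact Homeomorph.measurePreserving_toEquiv_zpow hφ _
  have hshift := measurePreserving_prodMap_add_const hφ (-(1 / k)) 0 1
  rw [mtMeasure, Measure.map_map (continuous_deckMap φ k).measurable (measurable_mtMk _),
    show deckMap φ k ∘ mtMk _ = mtMk _ ∘ Prod.map (· + -(1 / (k : ℝ))) φ from
      funext fun p => congrArg (mtMk _) (Prod.ext (sub_eq_add_neg _ _) rfl),
    ← Measure.map_map (measurable_mtMk _) hshift.measurable, hshift.map_eq, ← slabMeasure,
    zero_add, add_comm 1, slabMeasure_add_one he]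
  rfl

end Measure

namespace AsympPair

variable {X Y : Type*} [TopologicalSpace X] [MeasurableSpace X] [TopologicalSpace Y]
  [MeasurableSpace Y] {e : Equiv.Perm X} {e' : Equiv.Perm Y} {μ : Measure X} {ν : Measure Y}

theorem eq_mul_of_semiconj (π : C(MappingTorus e, MappingTorus e')) {c : ℝ} (hc : 0 < c)
    (hπ : ∀ s, Semiconj π (suspFlow e s) (suspFlow e' (c * s)))
    (hπμ : MeasurePreserving π (mtMeasure e μ) (mtMeasure e' ν))
    {f : C(MappingTorus e', Circ)} {r₁ r₂ : ℝ}
    (h₁ : AsympPair e μ (f.comp π) r₁) (h₂ : AsympPair e' ν f r₂) : r₁ = c * r₂ := by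
  obtain ⟨G₁, hG₁, hG₁0, hG₁f, hG₁r⟩ := h₁
  obtain ⟨G₂, hG₂, hG₂0, hG₂f, hG₂r⟩ := h₂
  have hG : G₁ = fun p => G₂ (c * p.1, π p.2) :=
    lift_eq_of_coe_eq hG₁ (by fun_prop) (fun m => by simp [hG₁0, hG₂0])
      (fun s m => by simp [hG₁f, hG₂f, hπ s m])
  have hint (s : ℝ) :
      ∫ m, G₁ (s, m) ∂mtMeasure e μ = ∫ y, G₂ (c * s, y) ∂mtMeasure e' ν := by
    rw [hG, ← hπμ.map_eq, integral_map π.continuous.aemeasurable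
      (by fun_prop : Continuous fun y => G₂ (c * s, y)).aestronglyMeasurable]
  refine tendsto_nhds_unique hG₁r
    (((hG₂r.comp (tendsto_id.const_mul_atTop hc)).const_mul c).congr' ?_)
  filter_upwards [eventually_ne_atTop 0] with s hs
  simp only [comp_apply, id, hint]
  field_simp

theorem eq_zero_of_iterate_eq_id [CompactSpace (MappingTorus e)]
    [IsFiniteMeasure (mtMeasure e μ)] (T : C(MappingTorus e, MappingTorus e))
    (hT : ∀ s, Function.Commute T (suspFlow e s))
    (hTμ : MeasurePreserving T (mtMeasure e μ) (mtMeasure e μ))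
    {k : ℕ} (hk : k ≠ 0) (hTk : T^[k] = id) {f : C(MappingTorus e, Circ)} {r : ℝ}
    (h : AsympPair e μ (f.comp T - f) r) : r = 0 := by
  obtain ⟨G, hG, hG0, hGf, hGr⟩ := h
  have hsum :
      (fun p : ℝ × MappingTorus e => ∑ j ∈ Finset.range k, G (p.1, T^[j] p.2)) = 0 := by
    refine lift_eq_of_coe_eq (by fun_prop) continuous_zero (fun m => by simp [hG0]) fun s m => ?_
    have hstep (j : ℕ) : (G (s, T^[j] m) : Circ)
        = (f (T^[j + 1] (suspFlow e s m)) - f (T^[j + 1] m))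
          - (f (T^[j] (suspFlow e s m)) - f (T^[j] m)) := by
      rw [hGf, ← (hT s).iterate_left j m]
      simp only [ContinuousMap.sub_apply, ContinuousMap.comp_apply, iterate_succ_apply']
      abel
    change QuotientAddGroup.mk' _ (∑ j ∈ Finset.range k, G (s, T^[j] m)) = ((0 : ℝ) : Circ)
    rw [map_sum, AddCircle.coe_zero]
    simp only [QuotientAddGroup.mk'_apply, hstep]
    rw [Finset.sum_range_sub (fun j => f (T^[j] (suspFlow e s m)) - f (T^[j] m)), hTk,
      iterate_zero, id_eq, id_eq, sub_self]
  have hint (s : ℝ) : ∫ m, G (s, m) ∂mtMeasure e μ = 0 := by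
    have hGs : Continuous fun m => G (s, m) := by fun_prop
    have hinv (j : ℕ) :
        ∫ m, G (s, T^[j] m) ∂mtMeasure e μ = ∫ m, G (s, m) ∂mtMeasure e μ := by
      conv_rhs => rw [← (hTμ.iterate j).map_eq]
      rw [integral_map (hTμ.iterate j).measurable.aemeasurable hGs.aestronglyMeasurable]
    have hsum_int : ∑ j ∈ Finset.range k, ∫ m, G (s, T^[j] m) ∂mtMeasure e μ = 0 := by
      have hGj (j : ℕ) : Integrable (fun m => G (s, T^[j] m)) (mtMeasure e μ) :=
        (hGs.comp (T.continuous.iterate j)).integrable_of_hasCompactSupport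
          (HasCompactSupport.of_compactSpace _)
      rw [← integral_finsetSum _ fun j _ => hGj j]
      simp only [fun m => congrFun hsum (s, m), Pi.zero_apply, integral_zero]
    rw [Finset.sum_congr rfl fun j _ => hinv j, Finset.sum_const, Finset.card_range,
      nsmul_eq_mul] at hsum_int
    exact (mul_eq_zero.mp hsum_int).resolve_left (Nat.cast_ne_zero.mpr hk)
  exact tendsto_nhds_unique hGr (by simpa only [hint, zero_div] using tendsto_const_nhds)

end AsympPair

theorem asymptotic_cycle_iterate_pushforward_and_deck_invariance_general
    (S : Type*) [TopologicalSpace S] [CompactSpace S]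
    [ChartedSpace (EuclideanHalfSpace 2) S] [MeasurableSpace S] [BorelSpace S]
    (μ : Measure S) [IsProbabilityMeasure μ]
    (φ : S ≃ₜ S) (hφ : MeasurePreserving ⇑φ μ μ)
    (k : ℕ) (hk : 1 ≤ k) :
    (∀ (f : C(MappingTorus φ.toEquiv, Circ)) (r₁ r₂ : ℝ),
      AsympPair (φ.toEquiv ^ k) μ (f.comp ⟨coverMap φ k, continuous_coverMap φ k⟩) r₁ →
      AsympPair φ.toEquiv μ f r₂ → r₁ = (k : ℝ) * r₂) ∧
    (∀ (f : C(MappingTorus (φ.toEquiv ^ k), Circ)) (r : ℝ),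
      AsympPair (φ.toEquiv ^ k) μ
        (f.comp ⟨deckMap φ k, continuous_deckMap φ k⟩ - f) r → r = 0) := by
  have : SecondCountableTopology (EuclideanHalfSpace 2) := by
    unfold EuclideanHalfSpace
    infer_instance
  have : SecondCountableTopology S :=
    ChartedSpace.secondCountable_of_sigmaCompact (EuclideanHalfSpace 2) S
  have hk₀ : k ≠ 0 := by omega
  exact ⟨fun f r₁ r₂ h₁ h₂ => h₁.eq_mul_of_semiconj _ (by positivity)
      (coverMap_semiconj_suspFlow φ k) (measurePreserving_coverMap hφ hk₀) h₂,
    fun f r h => h.eq_zero_of_iterate_eq_id _ (deckMap_commute_suspFlow φ k)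
      (measurePreserving_deckMap hφ k) hk₀ (deckMap_iterate_self φ hk₀)⟩

/-- **Lemma.**  Let `S` be a compact oriented surface, `φ` a homeomorphism of `S`
preserving a Borel probability measure `μ`, and `k ≥ 1`.  Let
`π_k : M_{φ^k} → M_φ` be the `k`-fold covering map and `T` the generator of its deck
group `ℤ/kℤ`.  Then `(π_k)_* C(φ^k, μ) = k · C(φ, μ)` in `H₁(M_φ; ℝ)` — in pairing
form, `⟨C(φ^k, μ), f ∘ π_k⟩ = k · ⟨C(φ, μ), f⟩` for every `f : M_φ → ℝ/ℤ` — and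
`⟨C(φ^k, μ), f ∘ T − f⟩ = 0` for every continuous `f : M_{φ^k} → ℝ/ℤ`. -/
theorem asymptotic_cycle_iterate_pushforward_and_deck_invariance
    (S : Type*) [TopologicalSpace S] [CompactSpace S] [ConnectedSpace S] [T2Space S]
    [ChartedSpace (EuclideanHalfSpace 2) S] [MeasurableSpace S] [BorelSpace S]
    (μ : Measure S) [IsProbabilityMeasure μ]
    (φ : S ≃ₜ S) (hφ : MeasurePreserving ⇑φ μ μ)
    (k : ℕ) (hk : 1 ≤ k) :
    (∀ (f : C(MappingTorus φ.toEquiv, Circ)) (r₁ r₂ : ℝ),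
      AsympPair (φ.toEquiv ^ k) μ (f.comp ⟨coverMap φ k, continuous_coverMap φ k⟩) r₁ →
      AsympPair φ.toEquiv μ f r₂ → r₁ = (k : ℝ) * r₂) ∧
    (∀ (f : C(MappingTorus (φ.toEquiv ^ k), Circ)) (r : ℝ),
      AsympPair (φ.toEquiv ^ k) μ
        (f.comp ⟨deckMap φ k, continuous_deckMap φ k⟩ - f) r → r = 0) :=
  asymptotic_cycle_iterate_pushforward_and_deck_invariance_general S μ φ hφ k hk

end
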